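/- arXiv:2509.14694 — 2 statements merged into one kernel-verified Lean document; each statement's English description precedes it below -/
import Mathlib

section
/- The function defined in Algorithm 1 (the greedy interval partitioning: repeatedly pop the maximum unprocessed element a across all input sets, assign the interval [a, b) to the set containing a where b is the previously popped element or +∞ initially, and finally assign [0, a_last) to the set of the last popped element) produces, on any list of pairwise disjoint finite nonempty-union sets of naturals, a list of predicates whose denotations are pairwise disjoint and cover all of ℕ, and such that each input set lᵢ is contained in the denotation of the i-th output predicate. -/
/-!
The loop pops the elements of `U = ⋃ lᵢ` in decreasing order `a₁ > a₂ > ⋯ > aₙ` and gives the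
set containing `aₖ` the interval `[aₖ, aₖ₋₁)` (with `a₀ = +∞`). These intervals tile `[aₙ, +∞)`,
each `aₖ` lies in its own interval, and the final interval `[0, aₙ)` completes the tiling of `ℕ`.
By induction on the number of remaining elements: a run below the bound `b` produces pairwise
disjoint sets containing the inputs whose union is `[min U, b)`, and reports `min U` as the last
popped element.
-/

/-- The interval `[a, b)` of naturals, where `b = none` denotes `+∞`. -/
def icoOpt (a : ℕ) : Option ℕ → Set ℕ
  | none => Set.Ici a
  | some b => Set.Ico a b

/-- Union of a list of finite sets of naturals. -/
def listUnion (L : List (Finset ℕ)) : Finset ℕ := L.foldr (· ∪ ·) ∅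

/-- The greedy interval-partitioning loop of Algorithm 1: repeatedly pop the maximum
unprocessed element `a` across all input sets, assign the interval `[a, b)` to the set
containing `a` (where `b` is the previously popped element, `+∞` initially), and recurse.
Returns the list of (denotations of) predicates together with the last popped
(index, element), if any. `fuel` bounds the number of iterations. -/
noncomputable def greedyAux : ℕ → List (Finset ℕ) → Option ℕ → List (Set ℕ) × Option (ℕ × ℕ)
  | 0, L, _ => (L.map fun _ => (∅ : Set ℕ), none)
  | fuel + 1, L, b =>
    if h : (listUnion L).Nonempty then
      let a := (listUnion L).max' h
      match L.findIdx? (fun l => decide (a ∈ l)) with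
      | none => (L.map fun _ => (∅ : Set ℕ), none)
      | some i =>
        let r := greedyAux fuel (L.set i ((L.getD i ∅).erase a)) (some a)
        (r.1.set i ((r.1.getD i ∅) ∪ icoOpt a b), some (r.2.getD (i, a)))
    else (L.map fun _ => (∅ : Set ℕ), none)

/-- The partitioning function of Algorithm 1 for the interval algebra over ℕ: run the
greedy loop (with enough fuel to exhaust all elements) and finally assign `[0, a_last)`
to the set of the last popped element `a_last`. -/
noncomputable def greedyPartition (L : List (Finset ℕ)) : List (Set ℕ) :=
  let r := greedyAux ((L.map Finset.card).sum) L none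
  match r.2 with
  | none => r.1
  | some (i, a) => r.1.set i ((r.1.getD i ∅) ∪ Set.Ico 0 a)

open Function

section ListGetD

variable {α : Type*}

theorem pairwise_disjoint_getD_iff [PartialOrder α] [OrderBot α] (P : List α) :
    Pairwise (Disjoint on fun j => P.getD j ⊥) ↔
      ∀ i j : Fin P.length, i ≠ j → Disjoint (P.get i) (P.get j) := by
  constructor
  · intro h i j hij
    simpa only [onFun, List.getD_eq_get] using h (Fin.val_ne_of_ne hij)
  · intro h i j hij
    by_cases hi : i < P.length
    · by_cases hj : j < P.length
      · simpa only [onFun, List.getD_eq_getElem _ _ hi, List.getD_eq_getElem _ _ hj,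
          List.get_eq_getElem] using h ⟨i, hi⟩ ⟨j, hj⟩ (by simpa [Fin.ext_iff])
      · simp only [onFun, List.getD_eq_default _ _ (not_lt.1 hj), disjoint_bot_right]
    · simp only [onFun, List.getD_eq_default _ _ (not_lt.1 hi), disjoint_bot_left]

theorem iUnion_get_eq_iUnion_getD (P : List (Set α)) :
    ⋃ i : Fin P.length, P.get i = ⋃ j, P.getD j ∅ := by
  ext x
  simp only [Set.mem_iUnion]
  constructor
  · rintro ⟨i, hx⟩
    exact ⟨i, by rwa [List.getD_eq_get]⟩
  · rintro ⟨j, hx⟩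
    by_cases hj : j < P.length
    · exact ⟨⟨j, hj⟩, by rwa [List.getD_eq_getElem _ _ hj] at hx⟩
    · rw [List.getD_eq_default _ _ (not_lt.1 hj)] at hx
      exact hx.elim

variable (P : List (Set α)) (S : Set α) {i : ℕ}

theorem getD_set_union_self (hi : i < P.length) :
    (P.set i (P.getD i ∅ ∪ S)).getD i ∅ = P.getD i ∅ ∪ S := by
  grind

theorem getD_set_union_of_ne {j : ℕ} (hji : j ≠ i) :
    (P.set i (P.getD i ∅ ∪ S)).getD j ∅ = P.getD j ∅ := by
  grind

theorem getD_subset_getD_set_union (j : ℕ) :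
    P.getD j ∅ ⊆ (P.set i (P.getD i ∅ ∪ S)).getD j ∅ := by
  by_cases hi : i < P.length
  · obtain rfl | hji := eq_or_ne j i
    · rw [getD_set_union_self P S hi]
      exact Set.subset_union_left
    · rw [getD_set_union_of_ne P S hji]
  · rw [List.set_eq_of_length_le (not_lt.1 hi)]

theorem iUnion_getD_set_union (hi : i < P.length) :
    ⋃ j, (P.set i (P.getD i ∅ ∪ S)).getD j ∅ = (⋃ j, P.getD j ∅) ∪ S := by
  apply subset_antisymm
  · refine Set.iUnion_subset fun j => ?_
    obtain rfl | hji := eq_or_ne j i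
    · rw [getD_set_union_self P S hi]
      exact Set.union_subset_union_left S (Set.subset_iUnion (fun j => P.getD j ∅) j)
    · rw [getD_set_union_of_ne P S hji]
      exact Set.subset_union_of_subset_left (Set.subset_iUnion (fun j => P.getD j ∅) j) S
  · refine Set.union_subset (Set.iUnion_mono (getD_subset_getD_set_union P S)) ?_
    refine subset_trans ?_ (Set.subset_iUnion _ i)
    rw [getD_set_union_self P S hi]
    exact Set.subset_union_right

theorem pairwise_disjoint_getD_set_union (hP : Pairwise (Disjoint on fun j => P.getD j ∅))
    (hS : Disjoint S (⋃ j, P.getD j ∅)) :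
    Pairwise (Disjoint on fun j => (P.set i (P.getD i ∅ ∪ S)).getD j ∅) := by
  have key : ∀ j k, j ≠ k → j ≠ i → Disjoint ((P.set i (P.getD i ∅ ∪ S)).getD j ∅)
      ((P.set i (P.getD i ∅ ∪ S)).getD k ∅) := by
    intro j k hjk hji
    rw [getD_set_union_of_ne P S hji]
    by_cases hi : i < P.length
    · obtain rfl | hki := eq_or_ne k i
      · rw [getD_set_union_self P S hi]
        exact Disjoint.union_right (hP hjk) (hS.mono_right (Set.subset_iUnion _ j)).symm
      · rw [getD_set_union_of_ne P S hki]
        exact hP hjk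
    · rw [List.set_eq_of_length_le (not_lt.1 hi)]
      exact hP hjk
  intro j k hjk
  by_cases hji : j = i
  · exact (key k j hjk.symm (hji ▸ hjk.symm)).symm
  · exact key j k hjk hji

end ListGetD

section ListUnion

theorem lt_length_of_mem_getD {α : Type*} {L : List (Finset α)} {i : ℕ} {a : α}
    (ha : a ∈ L.getD i ∅) : i < L.length := by
  by_contra h
  rw [List.getD_eq_default _ _ (not_lt.1 h)] at ha
  exact Finset.notMem_empty a ha

variable {L : List (Finset ℕ)}

theorem mem_listUnion {x : ℕ} : x ∈ listUnion L ↔ ∃ j, x ∈ L.getD j ∅ := by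
  induction L with
  | nil => simp [listUnion]
  | cons s t ih =>
    rw [listUnion, List.foldr_cons, Finset.mem_union, ← listUnion, ih]
    constructor
    · rintro (hx | ⟨j, hx⟩)
      · exact ⟨0, hx⟩
      · exact ⟨j + 1, hx⟩
    · rintro ⟨_ | j, hx⟩
      · exact Or.inl hx
      · exact Or.inr ⟨j, hx⟩

theorem getD_subset_listUnion (j : ℕ) : L.getD j ∅ ⊆ listUnion L :=
  fun _ hx => mem_listUnion.2 ⟨j, hx⟩

theorem card_listUnion_le_sum_card (L : List (Finset ℕ)) :
    (listUnion L).card ≤ (L.map Finset.card).sum := by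
  induction L with
  | nil => simp [listUnion]
  | cons s t ih =>
    rw [listUnion, List.foldr_cons, List.map_cons, List.sum_cons]
    exact (Finset.card_union_le _ _).trans (Nat.add_le_add_left ih _)

theorem getD_set_erase_subset (i a j : ℕ) :
    (L.set i ((L.getD i ∅).erase a)).getD j ∅ ⊆ L.getD j ∅ := by
  by_cases hi : i < L.length
  · obtain rfl | hji := eq_or_ne j i
    · rw [List.getD_eq_getElem _ _ (by simpa using hi), List.getElem_set_self]
      exact Finset.erase_subset _ _
    · grind
  · rw [List.set_eq_of_length_le (not_lt.1 hi)]

theorem listUnion_set_erase (hL : Pairwise (Disjoint on fun j => L.getD j ∅)) {i a : ℕ}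
    (ha : a ∈ L.getD i ∅) :
    listUnion (L.set i ((L.getD i ∅).erase a)) = (listUnion L).erase a := by
  ext x
  simp only [Finset.mem_erase, mem_listUnion]
  constructor
  · rintro ⟨j, hx⟩
    refine ⟨?_, j, getD_set_erase_subset i a j hx⟩
    rintro rfl
    obtain rfl | hji := eq_or_ne j i
    · grind
    · exact Finset.disjoint_left.1 (hL hji) (getD_set_erase_subset i x j hx) ha
  · rintro ⟨hxa, j, hx⟩
    exact ⟨j, by grind⟩

end ListUnion

theorem mem_icoOpt {a x : ℕ} {b : Option ℕ} : x ∈ icoOpt a b ↔ a ≤ x ∧ ∀ c ∈ b, x < c := by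
  cases b <;> simp [icoOpt]

theorem biUnion_icoOpt_erase_union {U : Finset ℕ} {a : ℕ} {b : Option ℕ} (ha : a ∈ U)
    (hb : ∀ c ∈ b, a < c) :
    (⋃ y ∈ U.erase a, icoOpt y (some a)) ∪ icoOpt a b = ⋃ y ∈ U, icoOpt y b := by
  ext x
  simp only [Set.mem_union, Set.mem_iUnion, mem_icoOpt, Finset.mem_erase, Option.mem_def,
    Option.some.injEq, forall_eq', exists_prop]
  constructor
  · rintro (⟨y, ⟨-, hy⟩, hyx, hxa⟩ | hx)
    · exact ⟨y, hy, hyx, fun c hc => hxa.trans (hb c hc)⟩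
    · exact ⟨a, ha, hx⟩
  · rintro ⟨y, hy, hyx, hxb⟩
    by_cases hxa : a ≤ x
    · exact Or.inr ⟨hxa, hxb⟩
    · exact Or.inl ⟨y, ⟨by rintro rfl; exact hxa hyx, hy⟩, hyx, not_le.1 hxa⟩

theorem biUnion_icoOpt_none_eq_Ici {U : Finset ℕ} {m : ℕ} (hm : IsLeast (U : Set ℕ) m) :
    ⋃ y ∈ U, icoOpt y none = Set.Ici m :=
  subset_antisymm (Set.iUnion₂_subset fun _ hy => Set.Ici_subset_Ici.2 (hm.2 hy))
    (Set.subset_biUnion_of_mem (u := fun y => icoOpt y none) hm.1)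

theorem exists_findIdx?_eq_some {L : List (Finset ℕ)} {a : ℕ} (ha : a ∈ listUnion L) :
    ∃ i, L.findIdx? (fun l => decide (a ∈ l)) = some i ∧ a ∈ L.getD i ∅ := by
  obtain ⟨j, hj⟩ := mem_listUnion.1 ha
  have hjL : j < L.length := lt_length_of_mem_getD hj
  rw [List.getD_eq_getElem _ _ hjL] at hj
  have hex : ∃ l ∈ L, decide (a ∈ l) := ⟨L[j], List.getElem_mem hjL, decide_eq_true hj⟩
  refine ⟨_, List.findIdx?_eq_some_of_exists hex, ?_⟩
  rw [List.getD_eq_getElem _ _ (List.findIdx_lt_length_of_exists hex)]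
  simpa using List.findIdx_getElem (w := List.findIdx_lt_length_of_exists hex)

theorem greedyAux_of_listUnion_eq_empty {L : List (Finset ℕ)} (hL : listUnion L = ∅)
    (fuel : ℕ) (b : Option ℕ) : greedyAux fuel L b = (L.map fun _ => ∅, none) := by
  cases fuel <;> simp [greedyAux, hL]

theorem greedyAux_succ {L : List (Finset ℕ)} (hL : (listUnion L).Nonempty) {i : ℕ}
    (hi : L.findIdx? (fun l => decide ((listUnion L).max' hL ∈ l)) = some i)
    (fuel : ℕ) (b : Option ℕ) :
    greedyAux (fuel + 1) L b =
      let a := (listUnion L).max' hL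
      let r := greedyAux fuel (L.set i ((L.getD i ∅).erase a)) (some a)
      (r.1.set i (r.1.getD i ∅ ∪ icoOpt a b), some (r.2.getD (i, a))) := by
  rw [greedyAux, dif_pos hL]
  simp only [hi]

/-- Invariant of `greedyAux _ L b`. The union `⋃ y ∈ listUnion L, [y, b)` in `iUnion_eq` is
`[min (listUnion L), b)`, or `∅` when `L` has no elements. -/
structure GreedyAuxSpec (L : List (Finset ℕ)) (b : Option ℕ)
    (r : List (Set ℕ) × Option (ℕ × ℕ)) : Prop where
  length_eq : r.1.length = L.length
  pairwise_disjoint : Pairwise (Disjoint on fun j => r.1.getD j ∅)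
  getD_subset : ∀ j, ↑(L.getD j ∅) ⊆ r.1.getD j ∅
  iUnion_eq : ⋃ j, r.1.getD j ∅ = ⋃ y ∈ listUnion L, icoOpt y b
  listUnion_eq_empty_of_eq_none : r.2 = none → listUnion L = ∅
  mem_lowerBounds_of_eq_some : ∀ i m, r.2 = some (i, m) →
    m ∈ L.getD i ∅ ∧ m ∈ lowerBounds (listUnion L : Set ℕ)

namespace GreedyAuxSpec

variable {L : List (Finset ℕ)} {b : Option ℕ}

theorem of_listUnion_eq_empty (hL : listUnion L = ∅) :
    GreedyAuxSpec L b (L.map fun _ => ∅, none) where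
  length_eq := List.length_map _
  pairwise_disjoint _ _ _ := by simp [onFun]
  getD_subset j := by
    have := getD_subset_listUnion (L := L) j
    simp_all
  iUnion_eq := by simp [hL]
  listUnion_eq_empty_of_eq_none _ := hL
  mem_lowerBounds_of_eq_some _ _ := nofun

theorem step (hL : Pairwise (Disjoint on fun j => L.getD j ∅)) {i a : ℕ}
    (hai : a ∈ L.getD i ∅) (hmax : ∀ y ∈ listUnion L, y ≤ a) (hb : ∀ c ∈ b, a < c)
    {r : List (Set ℕ) × Option (ℕ × ℕ)}
    (hr : GreedyAuxSpec (L.set i ((L.getD i ∅).erase a)) (some a) r) :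
    GreedyAuxSpec L b (r.1.set i (r.1.getD i ∅ ∪ icoOpt a b), some (r.2.getD (i, a))) := by
  have haU : a ∈ listUnion L := getD_subset_listUnion i hai
  have hU' := listUnion_set_erase hL hai
  have hi : i < r.1.length := by
    simpa [hr.length_eq] using lt_length_of_mem_getD hai
  have hlt : ∀ y ∈ (listUnion L).erase a, y < a := fun y hy =>
    lt_of_le_of_ne (hmax y (Finset.mem_of_mem_erase hy)) (Finset.ne_of_mem_erase hy)
  refine ⟨by simp [hr.length_eq], ?_, ?_, ?_, nofun, ?_⟩
  · refine pairwise_disjoint_getD_set_union _ _ hr.pairwise_disjoint ?_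
    rw [hr.iUnion_eq, Set.disjoint_iUnion₂_right]
    exact fun y _ => Set.disjoint_left.2 fun x hx hx' =>
      (mem_icoOpt.1 hx).1.not_gt ((mem_icoOpt.1 hx').2 a rfl)
  · intro j x hx
    by_cases hxa : j = i ∧ x = a
    · obtain ⟨rfl, rfl⟩ := hxa
      rw [getD_set_union_self _ _ hi]
      exact Or.inr (mem_icoOpt.2 ⟨le_rfl, hb⟩)
    · refine getD_subset_getD_set_union _ _ j (hr.getD_subset j ?_)
      grind
  · rw [iUnion_getD_set_union _ _ hi, hr.iUnion_eq, hU']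
    exact biUnion_icoOpt_erase_union haU hb
  · intro i₀ m h
    cases hr2 : r.2 with
    | none =>
      obtain ⟨rfl, rfl⟩ : i = i₀ ∧ a = m := by simpa [hr2] using h
      refine ⟨hai, fun y hy => ?_⟩
      by_contra hya
      have := hr.listUnion_eq_empty_of_eq_none hr2
      rw [hU'] at this
      exact Finset.notMem_empty y (this ▸ Finset.mem_erase.2 ⟨by omega, hy⟩)
    | some p =>
      obtain rfl : p = (i₀, m) := by simpa [hr2] using h
      obtain ⟨hm, hlow⟩ := hr.mem_lowerBounds_of_eq_some i₀ m hr2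
      have hmU : m ∈ (listUnion L).erase a := hU' ▸ getD_subset_listUnion i₀ hm
      refine ⟨getD_set_erase_subset i a i₀ hm, fun y hy => ?_⟩
      obtain rfl | hya := eq_or_ne y a
      · exact (hlt m hmU).le
      · exact hlow (hU' ▸ Finset.mem_erase.2 ⟨hya, hy⟩)

end GreedyAuxSpec

theorem greedyAuxSpec_greedyAux (fuel : ℕ) (L : List (Finset ℕ)) (b : Option ℕ)
    (hL : Pairwise (Disjoint on fun j => L.getD j ∅)) (hfuel : (listUnion L).card ≤ fuel)
    (hb : ∀ y ∈ listUnion L, ∀ c ∈ b, y < c) : GreedyAuxSpec L b (greedyAux fuel L b) := by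
  induction fuel generalizing L b with
  | zero =>
    have hU := Finset.card_eq_zero.1 (Nat.le_zero.1 hfuel)
    rw [greedyAux_of_listUnion_eq_empty hU]
    exact .of_listUnion_eq_empty hU
  | succ fuel ih =>
    rcases (listUnion L).eq_empty_or_nonempty with hU | hU
    · rw [greedyAux_of_listUnion_eq_empty hU]
      exact .of_listUnion_eq_empty hU
    set a := (listUnion L).max' hU
    have haU : a ∈ listUnion L := (listUnion L).max'_mem hU
    obtain ⟨i, hfind, hai⟩ := exists_findIdx?_eq_some haU
    have hU' := listUnion_set_erase hL hai
    rw [greedyAux_succ hU hfind]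
    refine .step hL hai (fun y hy => (listUnion L).le_max' y hy) (hb a haU) (ih _ _ ?_ ?_ ?_)
    · exact hL.mono fun j k h =>
        h.mono (getD_set_erase_subset i a j) (getD_set_erase_subset i a k)
    · rw [hU', Finset.card_erase_of_mem haU]
      omega
    · rw [hU']
      rintro y hy _ ⟨⟩
      exact (listUnion L).lt_max'_of_mem_erase_max' hU hy

/-- On any list of pairwise disjoint finite sets of naturals with nonempty union,
Algorithm 1 produces a list of predicates (of the same length) whose denotations are
pairwise disjoint and cover all of ℕ, and each input set `lᵢ` is contained in the
denotation of the `i`-th output predicate. -/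
theorem stmt3 (L : List (Finset ℕ))
    (hdisj : ∀ i j : Fin L.length, i ≠ j → Disjoint (L.get i) (L.get j))
    (hne : ∃ i : Fin L.length, (L.get i).Nonempty) :
    (greedyPartition L).length = L.length ∧
    (∀ i j : Fin (greedyPartition L).length, i ≠ j →
      (greedyPartition L).get i ∩ (greedyPartition L).get j = ∅) ∧
    (⋃ i : Fin (greedyPartition L).length, (greedyPartition L).get i) = Set.univ ∧
    (∀ i : Fin L.length, ↑(L.get i) ⊆ (greedyPartition L).getD i ∅) := by
  have hL : Pairwise (Disjoint on fun j => L.getD j ∅) := (pairwise_disjoint_getD_iff L).2 hdisj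
  have hU : (listUnion L).Nonempty := by
    obtain ⟨i, x, hx⟩ := hne
    exact ⟨x, getD_subset_listUnion i (by rwa [List.getD_eq_get])⟩
  have spec := greedyAuxSpec_greedyAux _ L none hL (card_listUnion_le_sum_card L) (by simp)
  set r := greedyAux ((L.map Finset.card).sum) L none
  obtain ⟨⟨i, m⟩, hr2⟩ := Option.ne_none_iff_exists'.1
    (mt spec.listUnion_eq_empty_of_eq_none hU.ne_empty)
  obtain ⟨hm, hlow⟩ := spec.mem_lowerBounds_of_eq_some i m hr2
  have hP : greedyPartition L = r.1.set i (r.1.getD i ∅ ∪ Set.Ico 0 m) := by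
    simp only [greedyPartition, r, hr2]
  have hi : i < r.1.length := spec.length_eq ▸ lt_length_of_mem_getD hm
  have hcover : ⋃ j, r.1.getD j ∅ = Set.Ici m :=
    spec.iUnion_eq.trans (biUnion_icoOpt_none_eq_Ici ⟨getD_subset_listUnion i hm, hlow⟩)
  have hIco : Set.Ico 0 m = Set.Iio m := Set.ext fun x => by simp
  refine ⟨by rw [hP, List.length_set, spec.length_eq], ?_, ?_, fun j => ?_⟩
  · have := pairwise_disjoint_getD_set_union r.1 (Set.Ico 0 m) (i := i) spec.pairwise_disjoint
      (by rw [hcover, hIco]; exact Set.Iio_disjoint_Ici le_rfl)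
    rw [← hP] at this
    intro j k hjk
    exact Set.disjoint_iff_inter_eq_empty.1 ((pairwise_disjoint_getD_iff _).1 this j k hjk)
  · rw [iUnion_get_eq_iUnion_getD, hP, iUnion_getD_set_union _ _ hi, hcover, hIco, Set.union_comm]
    exact Set.Iio_union_Ici
  · rw [hP, ← List.getD_eq_get _ ∅]
    exact (spec.getD_subset j).trans (getD_subset_getD_set_union _ _ j)
end

section
/- Let T = (D, S, R, Σ_E, E, f) be a cohesive observation table and M_hyp^e = (Σ_E, Q, q0, Γ, δ_t^e, δ_o^e) the evidence Mealy automaton constructed from T. Then for every word w ∈ S ∪ R, the state reached from the initial state on input w equals row(w): δ_t^e(q0, w) = row(w). -/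
attribute [local instance] Classical.propDecidable

/-- A (deterministic) Mealy automaton over input alphabet `A`, states `Q`,
output alphabet `Γ`, with initial state, transition and output functions. -/
structure Mealy (A Q Γ : Type*) where
  init : Q
  δt : Q → A → Q
  δo : Q → A → Γ

namespace Mealy

variable {A Q Γ : Type*}

/-- Extended transition function on words. -/
def transStar (M : Mealy A Q Γ) : Q → List A → Q
  | q, [] => q
  | q, a :: w => M.transStar (M.δt q a) w

/-- Extended output function on a nonempty word given as head and tail. -/
def outStar (M : Mealy A Q Γ) : Q → A → List A → Γ
  | q, a, [] => M.δo q a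
  | q, a, b :: w => M.outStar (M.δt q a) b w

/-- `M(a·w)`: output of the automaton on the nonempty word `a :: w` from the initial state. -/
def out (M : Mealy A Q Γ) (a : A) (w : List A) : Γ := M.outStar M.init a w

end Mealy

/-- An observation table `T = (D, S, R, Σ_E, E, f)` for a target Mealy-style output
function `tgt : D⁺ → Γ`, where `f(w, e) = tgt(w·e)`.  `S ∪ R` is prefix-closed,
`Σ_E ∪ E` is suffix-closed, `ε ∈ S`, `Σ_E` is nonempty, and all components are finite. -/
structure ObsTable (D Γ : Type*) where
  S : Set (List D)
  R : Set (List D)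
  E : Set (List D)
  sigE : Set D
  tgt : List D → Γ
  S_finite : S.Finite
  R_finite : R.Finite
  E_finite : E.Finite
  sigE_finite : sigE.Finite
  eps_mem : ([] : List D) ∈ S
  sigE_nonempty : sigE.Nonempty
  prefixClosed : ∀ w ∈ S ∪ R, ∀ v : List D, v <+: w → v ∈ S ∪ R
  suffixClosed : ∀ w, (w ∈ E ∨ ∃ a ∈ sigE, w = [a]) →
    ∀ v : List D, v <:+ w → v ≠ [] → (v ∈ E ∨ ∃ a ∈ sigE, v = [a])

namespace ObsTable

variable {D Γ : Type*} (T : ObsTable D Γ)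

/-- The set of column indices `Σ_E ∪ E` (characters of `Σ_E` viewed as length-1 words). -/
def col : Set (List D) := {w | w ∈ T.E ∨ ∃ a ∈ T.sigE, w = [a]}

/-- The table entry `f(w, e) = tgt(w·e)`. -/
def f (w e : List D) : Γ := T.tgt (w ++ e)

/-- `row(w₁) = row(w₂)`: the rows of `w₁` and `w₂` agree on every column. -/
def rowEq (w₁ w₂ : List D) : Prop := ∀ e ∈ T.col, T.f w₁ e = T.f w₂ e

/-- Closedness: every row of `R` equals some row of `S`. -/
def Closed : Prop := ∀ r ∈ T.R, ∃ s ∈ T.S, T.rowEq s r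

/-- Consistency. -/
def Consistent : Prop := ∀ w₁ ∈ T.S ∪ T.R, ∀ w₂ ∈ T.S ∪ T.R, T.rowEq w₁ w₂ →
  ∀ a : D, w₁ ++ [a] ∈ T.S ∪ T.R → w₂ ++ [a] ∈ T.S ∪ T.R →
    T.rowEq (w₁ ++ [a]) (w₂ ++ [a])

/-- Evidence-closedness: `s·e ∈ S ∪ R` for all `s ∈ S`, `e ∈ Σ_E`. -/
def EvidenceClosed : Prop := ∀ s ∈ T.S, ∀ a ∈ T.sigE, s ++ [a] ∈ T.S ∪ T.R

/-- Output-closedness: `w·a ∈ S ∪ R` implies `a ∈ Σ_E`. -/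
def OutputClosed : Prop := ∀ w ∈ T.S ∪ T.R, ∀ a : D, w ++ [a] ∈ T.S ∪ T.R → a ∈ T.sigE

/-- Cohesiveness: closed, consistent, evidence-closed and output-closed. -/
def Cohesive : Prop := T.Closed ∧ T.Consistent ∧ T.EvidenceClosed ∧ T.OutputClosed

/-- Reducedness: distinct elements of `S` have distinct rows. -/
def Reduced : Prop := ∀ s₁ ∈ T.S, ∀ s₂ ∈ T.S, T.rowEq s₁ s₂ → s₁ = s₂

/-- `row(w)` as a function from columns to outputs. -/
def rowFun (w : List D) : ↥T.col → Γ := fun e => T.f w e.1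

/-- The state space of the evidence Mealy automaton: `{row(s) : s ∈ S}`. -/
def EvQ : Type _ := {g : ↥T.col → Γ // g ∈ rowFun T '' T.S}

/-- A representative `s ∈ S` of a state (a row) of the evidence automaton. -/
noncomputable def rep (q : T.EvQ) : List D :=
  Classical.choose (show ∃ x, x ∈ T.S ∧ T.rowFun x = q.1 from q.2)

/-- The evidence Mealy automaton constructed from `T`: states are the rows of `S`,
the initial state is `row(ε)`, `δt(row(s), a) = row(s·a)` and `δo(row(s), a) = f(s, a)`.
(For a cohesive table these equations hold for the function below; outside that
situation a junk value is returned.) -/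
noncomputable def evidence : Mealy D T.EvQ Γ where
  init := ⟨T.rowFun [], Set.mem_image_of_mem _ T.eps_mem⟩
  δt := fun q a =>
    if h : T.rowFun (T.rep q ++ [a]) ∈ rowFun T '' T.S then ⟨_, h⟩ else q
  δo := fun q a => T.tgt (T.rep q ++ [a])

/-- A Mealy automaton `M` is evidence compatible with `T` if `M(s·e) = f(s, e)` for
all `s ∈ S ∪ R` and `e ∈ Σ_E ∪ E`. -/
def EvidenceCompatible {Q : Type*} (M : Mealy D Q Γ) : Prop :=
  ∀ s ∈ T.S ∪ T.R, ∀ e ∈ T.col, ∀ (a : D) (w : List D),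
    s ++ e = a :: w → M.out a w = T.f s e

end ObsTable

/-!
Induction on `w` from the right. If the state reached on `v` is `row(v)`, its representative
`s ∈ S` has the row of `v`; output- and evidence-closedness put `s·a` in `S ∪ R`, closedness
makes `row(s·a)` a state, and consistency gives `row(s·a) = row(v·a)`.
-/

namespace Mealy

variable {A Q Γ : Type*}

theorem transStar_append_singleton (M : Mealy A Q Γ) (q : Q) (w : List A) (a : A) :
    M.transStar q (w ++ [a]) = M.δt (M.transStar q w) a := by
  induction w generalizing q with
  | nil => rfl
  | cons b v ih => exact ih _

end Mealy

namespace ObsTable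

variable {D Γ : Type*} {T : ObsTable D Γ}

theorem rowFun_eq_of_rowEq {w₁ w₂ : List D} (h : T.rowEq w₁ w₂) :
    T.rowFun w₁ = T.rowFun w₂ :=
  funext fun e => h e.1 e.2

theorem rowEq_of_rowFun_eq {w₁ w₂ : List D} (h : T.rowFun w₁ = T.rowFun w₂) :
    T.rowEq w₁ w₂ :=
  fun e he => congrFun h ⟨e, he⟩

theorem Closed.rowFun_mem_image (hcl : T.Closed) {w : List D} (hw : w ∈ T.S ∪ T.R) :
    T.rowFun w ∈ T.rowFun '' T.S := by
  rcases hw with hS | hR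
  · exact Set.mem_image_of_mem _ hS
  · obtain ⟨s, hs, hsw⟩ := hcl w hR
    exact ⟨s, hs, rowFun_eq_of_rowEq hsw⟩

theorem rep_mem (q : T.EvQ) : T.rep q ∈ T.S :=
  (Classical.choose_spec (show ∃ x, x ∈ T.S ∧ T.rowFun x = q.1 from q.2)).1

theorem rowFun_rep (q : T.EvQ) : T.rowFun (T.rep q) = q.1 :=
  (Classical.choose_spec (show ∃ x, x ∈ T.S ∧ T.rowFun x = q.1 from q.2)).2

theorem evidence_δt_val_eq_rowFun_rep {q : T.EvQ} {a : D}
    (h : T.rowFun (T.rep q ++ [a]) ∈ T.rowFun '' T.S) :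
    (T.evidence.δt q a).1 = T.rowFun (T.rep q ++ [a]) :=
  congrArg Subtype.val (dif_pos h)

theorem Cohesive.evidence_δt_val_eq_rowFun (hT : T.Cohesive) {q : T.EvQ} {v : List D} {a : D}
    (hv : v ∈ T.S ∪ T.R) (hva : v ++ [a] ∈ T.S ∪ T.R) (hq : q.1 = T.rowFun v) :
    (T.evidence.δt q a).1 = T.rowFun (v ++ [a]) := by
  obtain ⟨hcl, hcons, hev, hout⟩ := hT
  have hrepa : T.rep q ++ [a] ∈ T.S ∪ T.R := hev _ (rep_mem q) a (hout v hv a hva)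
  rw [evidence_δt_val_eq_rowFun_rep (hcl.rowFun_mem_image hrepa)]
  refine rowFun_eq_of_rowEq (hcons _ (Or.inl (rep_mem q)) _ hv ?_ a hrepa hva)
  exact rowEq_of_rowFun_eq ((rowFun_rep q).trans hq)

end ObsTable

/-- For a cohesive observation table `T` and its evidence Mealy automaton, for every
word `w ∈ S ∪ R`, the state reached from the initial state on `w` equals `row(w)`:
`δ_t^e(q0, w) = row(w)`. -/
theorem stmt5 {D Γ : Type*} (T : ObsTable D Γ) (h : T.Cohesive) :
    ∀ w ∈ T.S ∪ T.R,
      (T.evidence.transStar T.evidence.init w).1 = T.rowFun w := by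
  intro w hw
  induction w using List.reverseRecOn with
  | nil => rfl
  | append_singleton v a ih =>
    have hv : v ∈ T.S ∪ T.R := T.prefixClosed _ hw v ⟨[a], rfl⟩
    rw [Mealy.transStar_append_singleton]
    exact h.evidence_δt_val_eq_rowFun hv hw (ih hv)
end
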